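/- Let (G, ≺) be a finitely generated left-ordered group and suppose Z is a finitely generated, central subgroup that is cofinal for ≺ (for every g ∈ G there exist z₁, z₂ ∈ Z with z₁ ≺ g ≺ z₂). Then the positive cone P = {g : 1 ≺ g} is coarsely connected in any Cayley graph of G with respect to a finite generating set. -/

import Mathlib

/-!
Since `Z` is finitely generated and central, the powers of one central element `σ > 1` are
already cofinal: every element of `Z` lies below a power of the largest of the generators and
their inverses. Two positive
elements `a`, `b` are then joined through `σ ^ k * a` and `σ ^ k * b`. The `σ`-rays
`σ ^ i * a` stay positive, and `σ ^ k` commutes with everything, so for `k` large the shift by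
`σ ^ k` of a word from `a` to `b` stays positive as well. Every step has length at most
`max 1 (wordLength X σ)`.
-/

open scoped Pointwise

/-- A positive cone of a group `G`: a subsemigroup `P` such that
`G = P ⊔ P⁻¹ ⊔ {1}` (disjoint union). -/
def IsPositiveCone {G : Type*} [Group G] (P : Set G) : Prop :=
  (∀ a ∈ P, ∀ b ∈ P, a * b ∈ P) ∧
  (∀ g : G, g ∈ P ∨ g⁻¹ ∈ P ∨ g = 1) ∧
  (∀ g ∈ P, g⁻¹ ∉ P) ∧
  (1 : G) ∉ P

/-- Word length of `g` with respect to the generating set `X`. -/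
noncomputable def wordLength {G : Type*} [Group G] (X : Set G) (g : G) : ℕ :=
  sInf {n | ∃ l : List G, (∀ x ∈ l, x ∈ X) ∧ l.length = n ∧ l.prod = g}

/-- Word metric on `G` with respect to `X`. -/
noncomputable def wordDist {G : Type*} [Group G] (X : Set G) (g h : G) : ℕ :=
  wordLength X (g⁻¹ * h)

/-- An `r`-path from `a` to `b` supported in `S` (consecutive word-metric
distances at most `r`). -/
def IsRPath {G : Type*} [Group G] (X : Set G) (r : ℕ) (S : Set G) (a b : G) : Prop :=
  ∃ l : List G, l ≠ [] ∧ l.head? = some a ∧ l.getLast? = some b ∧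
    (∀ x ∈ l, x ∈ S) ∧ l.Chain' (fun u v => wordDist X u v ≤ r)

/-- `S` is `r`-coarsely connected in the Cayley graph `Γ(G,X)`. -/
def CoarselyConnectedWith {G : Type*} [Group G] (X : Set G) (r : ℕ) (S : Set G) : Prop :=
  ∀ a ∈ S, ∀ b ∈ S, IsRPath X r S a b

/-- `X` is a finite symmetric generating set of `G`. -/
def IsGenSet {G : Type*} [Group G] (X : Set G) : Prop :=
  X.Finite ∧ (∀ x ∈ X, x⁻¹ ∈ X) ∧ Subgroup.closure X = ⊤

/-- A positive cone on a subset `K` of `G` (used for subgroups such as kernels). -/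
def IsPositiveConeOn {G : Type*} [Group G] (K P : Set G) : Prop :=
  P ⊆ K ∧ (∀ a ∈ P, ∀ b ∈ P, a * b ∈ P) ∧ (∀ g ∈ K, g ∈ P ∨ g⁻¹ ∈ P ∨ g = 1) ∧
  (∀ g ∈ P, g⁻¹ ∉ P) ∧ (1 : G) ∉ P

/-- The sub-semigroup generated by `S`: nonempty products of elements of `S`. -/
def SemigroupClosure {G : Type*} [Group G] (S : Set G) : Set G :=
  {g | ∃ l : List G, l ≠ [] ∧ (∀ x ∈ l, x ∈ S) ∧ l.prod = g}

open Filter Subgroup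

section WordMetric

variable {G : Type*} [Group G] {X S : Set G} {ρ : ℕ}

lemma wordLength_one (X : Set G) : wordLength X 1 = 0 :=
  Nat.eq_zero_of_le_zero (Nat.sInf_le ⟨[], by simp, rfl, rfl⟩)

lemma wordLength_le_one {x : G} (hx : x ∈ X) : wordLength X x ≤ 1 :=
  Nat.sInf_le ⟨[x], by simpa using hx, rfl, by simp⟩

lemma wordLength_inv (hsym : ∀ x ∈ X, x⁻¹ ∈ X) (g : G) :
    wordLength X g⁻¹ = wordLength X g := by
  have key : ∀ (h : G) (n : ℕ),
      (∃ l : List G, (∀ x ∈ l, x ∈ X) ∧ l.length = n ∧ l.prod = h) →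
      ∃ l : List G, (∀ x ∈ l, x ∈ X) ∧ l.length = n ∧ l.prod = h⁻¹ := by
    rintro h n ⟨l, hl, rfl, rfl⟩
    refine ⟨(l.map (·⁻¹)).reverse, ?_, by simp, (List.prod_inv_reverse l).symm⟩
    intro x hx
    rw [List.mem_reverse, List.mem_map] at hx
    obtain ⟨y, hy, rfl⟩ := hx
    exact hsym y (hl y hy)
  unfold wordLength
  congr 1
  ext n
  exact ⟨fun h => by simpa using key g⁻¹ n h, key g n⟩

@[simp]
lemma wordDist_self (X : Set G) (g : G) : wordDist X g g = 0 := by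
  simp [wordDist, wordLength_one]

lemma wordDist_comm (hsym : ∀ x ∈ X, x⁻¹ ∈ X) (g h : G) : wordDist X g h = wordDist X h g := by
  rw [wordDist, ← wordLength_inv hsym, mul_inv_rev, inv_inv, wordDist]

@[simp]
lemma wordDist_mul_right (X : Set G) (g x : G) : wordDist X g (g * x) = wordLength X x := by
  simp [wordDist]

lemma exists_list_prod_eq (hsym : ∀ x ∈ X, x⁻¹ ∈ X) (hgen : closure X = ⊤) (g : G) :
    ∃ l : List G, (∀ x ∈ l, x ∈ X) ∧ l.prod = g := by
  have hg : g ∈ Submonoid.closure (X ∪ X⁻¹) := by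
    rw [← closure_toSubmonoid, hgen]
    trivial
  obtain ⟨l, hl, rfl⟩ := Submonoid.exists_list_of_mem_closure hg
  refine ⟨l, fun x hx => ?_, rfl⟩
  rcases hl x hx with h | h
  exacts [h, inv_inv x ▸ hsym _ h]

lemma IsRPath.trans {a b c : G} (h₁ : IsRPath X ρ S a b) (h₂ : IsRPath X ρ S b c) :
    IsRPath X ρ S a c := by
  obtain ⟨l₁, hne₁, hhead₁, hlast₁, hS₁, hchain₁⟩ := h₁
  obtain ⟨l₂, hne₂, hhead₂, hlast₂, hS₂, hchain₂⟩ := h₂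
  refine ⟨l₁ ++ l₂, by simp [hne₁], ?_, ?_, ?_, ?_⟩
  · rwa [List.head?_append_of_ne_nil _ hne₁]
  · rwa [List.getLast?_append_of_ne_nil _ hne₂]
  · intro x hx
    rcases List.mem_append.mp hx with h | h
    exacts [hS₁ x h, hS₂ x h]
  · refine List.isChain_append.mpr ⟨hchain₁, hchain₂, ?_⟩
    rintro x hx y hy
    rw [hlast₁, Option.mem_some_iff] at hx
    rw [hhead₂, Option.mem_some_iff] at hy
    simp [← hx, ← hy]

lemma IsRPath.symm (hsym : ∀ x ∈ X, x⁻¹ ∈ X) {a b : G} (h : IsRPath X ρ S a b) :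
    IsRPath X ρ S b a := by
  obtain ⟨l, hne, hhead, hlast, hS, hchain⟩ := h
  refine ⟨l.reverse, by simpa, by rwa [List.head?_reverse], by rwa [List.getLast?_reverse],
    by simpa, ?_⟩
  rw [List.Chain', List.isChain_reverse]
  exact hchain.imp fun u v huv => (wordDist_comm hsym v u).trans_le huv

lemma isRPath_of_seq (f : ℕ → G) (n : ℕ) (hS : ∀ i ≤ n, f i ∈ S)
    (hdist : ∀ i < n, wordDist X (f i) (f (i + 1)) ≤ ρ) : IsRPath X ρ S (f 0) (f n) := by
  refine ⟨(List.range (n + 1)).map f, by simp, ?_, ?_, ?_, ?_⟩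
  · simp [List.range_succ_eq_map]
  · simp [List.range_succ]
  · simp only [List.mem_map, List.mem_range]
    rintro _ ⟨i, hi, rfl⟩
    exact hS i (Nat.le_of_lt_succ hi)
  · rw [List.Chain', List.isChain_map]
    exact (List.isChain_range_succ _ n).mpr hdist

lemma isRPath_mul_list_prod {l : List G} (hl : ∀ x ∈ l, x ∈ X) (hρ : 1 ≤ ρ) (g : G)
    (hS : ∀ i ≤ l.length, g * (l.take i).prod ∈ S) : IsRPath X ρ S g (g * l.prod) := by
  have hpath := isRPath_of_seq (X := X) (ρ := ρ) (fun i => g * (l.take i).prod) l.length hS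
    fun i hi => by
      rw [List.prod_take_succ l i hi, ← mul_assoc, wordDist_mul_right]
      exact (wordLength_le_one (hl _ (List.getElem_mem hi))).trans hρ
  simpa using hpath

lemma isRPath_pow_mul {σ : G} (hσ : σ ∈ center G) (hρ : wordLength X σ ≤ ρ) {a : G} {k : ℕ}
    (hS : ∀ i ≤ k, σ ^ i * a ∈ S) : IsRPath X ρ S a (σ ^ k * a) := by
  have hpath := isRPath_of_seq (X := X) (ρ := ρ) (fun i => σ ^ i * a) k hS fun i _ => by
    have hstep : σ ^ (i + 1) * a = σ ^ i * a * σ := by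
      rw [pow_succ, mul_assoc, mul_assoc, mem_center_iff.mp hσ a]
    simpa [hstep] using hρ
  simpa using hpath

end WordMetric

section LeftPreordered

variable {G : Type*} [Group G] [Preorder G] [MulLeftMono G] {σ : G}

lemma mul_le_pow_add (hσ : σ ∈ center G) {a b : G} {j k : ℕ} (ha : a ≤ σ ^ j)
    (hb : b ≤ σ ^ k) : a * b ≤ σ ^ (j + k) :=
  calc a * b ≤ a * σ ^ k := mul_le_mul_right hb a
    _ = σ ^ k * a := mem_center_iff.mp (pow_mem hσ k) a
    _ ≤ σ ^ k * σ ^ j := mul_le_mul_right ha _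
    _ = σ ^ (j + k) := by rw [← pow_add, add_comm]

lemma exists_le_pow_of_mem_closure (hσ : σ ∈ center G) {S : Set G}
    (hS : ∀ s ∈ S, s ≤ σ ∧ s⁻¹ ≤ σ) {g : G} (hg : g ∈ closure S) :
    ∃ k : ℕ, g ≤ σ ^ k ∧ g⁻¹ ≤ σ ^ k := by
  induction hg using closure_induction with
  | mem s hs => exact ⟨1, by simpa using hS s hs⟩
  | one => exact ⟨0, by simp⟩
  | mul a b _ _ iha ihb =>
    obtain ⟨j, haj, haj'⟩ := iha
    obtain ⟨k, hbk, hbk'⟩ := ihb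
    refine ⟨j + k, mul_le_pow_add hσ haj hbk, ?_⟩
    rw [mul_inv_rev, add_comm]
    exact mul_le_pow_add hσ hbk' haj'
  | inv a _ iha =>
    obtain ⟨k, hak, hak'⟩ := iha
    exact ⟨k, hak', by rwa [inv_inv]⟩

lemma eventually_lt_pow (hσ : 1 ≤ σ) (hcof : ∀ g : G, ∃ k : ℕ, g < σ ^ k) (g : G) :
    ∀ᶠ k in atTop, g < σ ^ k := by
  obtain ⟨j, hj⟩ := hcof g
  exact eventually_atTop.mpr ⟨j, fun k hk => hj.trans_le (pow_le_pow_right' hσ hk)⟩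

end LeftPreordered

section LeftOrdered

variable {G : Type*} [Group G] [LinearOrder G] [MulLeftMono G] {σ : G}

lemma exists_mem_center_one_lt_pow_cofinal {Z : Subgroup G} (hZfg : Z.FG)
    (hZ : Z ≤ center G) (hcof : ∀ g : G, ∃ z ∈ Z, g < z) :
    ∃ σ ∈ center G, 1 < σ ∧ ∀ g : G, ∃ k : ℕ, g < σ ^ k := by
  classical
  obtain ⟨S, rfl⟩ := hZfg
  set T : Finset G := insert 1 (S ∪ S.image (·⁻¹))
  set σ := T.max' (Finset.insert_nonempty _ _)
  have hσ : σ ∈ center G := by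
    have hσT : σ ∈ T := T.max'_mem _
    simp only [T, Finset.mem_insert, Finset.mem_union, Finset.mem_image] at hσT
    rcases hσT with h | h | ⟨s, hs, h⟩
    · rw [h]; exact one_mem _
    · exact hZ (subset_closure h)
    · rw [← h]; exact inv_mem (hZ (subset_closure hs))
  have hbound : ∀ g : G, ∃ k : ℕ, g < σ ^ k := by
    intro g
    obtain ⟨z, hz, hgz⟩ := hcof g
    obtain ⟨k, hzk, -⟩ := exists_le_pow_of_mem_closure hσ
      (fun s hs => ⟨T.le_max' s (by simp [T, Finset.mem_coe.mp hs]),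
        T.le_max' s⁻¹ (by simp [T, Finset.mem_coe.mp hs])⟩) hz
    exact ⟨k, hgz.trans_le hzk⟩
  refine ⟨σ, hσ, ?_, hbound⟩
  obtain ⟨k, hk⟩ := hbound 1
  by_contra! hσ1
  exact (pow_le_one' hσ1 k).not_gt hk

theorem coarselyConnectedWith_one_lt_of_central_cofinal {X : Set G}
    (hsym : ∀ x ∈ X, x⁻¹ ∈ X) (hgen : closure X = ⊤) (hσ : σ ∈ center G) (hσ1 : 1 < σ)
    (hcof : ∀ g : G, ∃ k : ℕ, g < σ ^ k) :
    CoarselyConnectedWith X (max 1 (wordLength X σ)) {g : G | 1 < g} := by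
  have ray : ∀ (a : G) (k : ℕ), 1 < a →
      IsRPath X (max 1 (wordLength X σ)) {g : G | 1 < g} a (σ ^ k * a) := fun a k ha =>
    isRPath_pow_mul hσ (le_max_right _ _) fun i _ =>
      (one_le_pow_of_one_le' hσ1.le i).trans_lt (lt_mul_of_one_lt_right' _ ha)
  intro a ha b hb
  obtain ⟨l, hlX, hl⟩ := exists_list_prod_eq hsym hgen (a⁻¹ * b)
  obtain ⟨k, hk⟩ := ((eventually_all_finset (Finset.range (l.length + 1))).mpr
    fun i _ => eventually_lt_pow hσ1.le hcof (a * (l.take i).prod)⁻¹).exists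
  have word : IsRPath X (max 1 (wordLength X σ)) {g : G | 1 < g} (σ ^ k * a) (σ ^ k * b) := by
    have := isRPath_mul_list_prod (S := {g : G | 1 < g}) hlX (le_max_left 1 (wordLength X σ))
      (σ ^ k * a) fun i hi => by
      have hpos := inv_lt_iff_one_lt_mul'.mp (hk i (Finset.mem_range_succ_iff.mpr hi))
      rwa [mul_assoc, ← mem_center_iff.mp (pow_mem hσ k)]
    rwa [hl, mul_assoc, mul_inv_cancel_left] at this
  exact (ray a k ha).trans (word.trans ((ray b k hb).symm hsym))

end LeftOrdered

/-- if a finitely generated left-ordered group has a finitely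
generated central cofinal subgroup, then the positive cone is coarsely
connected (in any Cayley graph with respect to a finite generating set). -/
theorem stmt_10 {G : Type*} [Group G] (X : Set G) (hX : IsGenSet X)
    (r : G → G → Prop)
    (hirr : ∀ a : G, ¬ r a a)
    (htrans : ∀ a b c : G, r a b → r b c → r a c)
    (htri : ∀ a b : G, r a b ∨ a = b ∨ r b a)
    (hleft : ∀ g a b : G, r a b → r (g * a) (g * b))
    (Z : Subgroup G) (hZfg : Z.FG) (hZcent : Z ≤ Subgroup.center G)
    (hcof : ∀ g : G, ∃ z₁ ∈ Z, ∃ z₂ ∈ Z, r z₁ g ∧ r g z₂) :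
    ∃ ρ : ℕ, 1 ≤ ρ ∧ CoarselyConnectedWith X ρ {g : G | r 1 g} := by
  classical
  have : IsStrictTotalOrder G r :=
    { irrefl := hirr, trans := htrans
      trichotomous := fun a b hab hba => ((htri a b).resolve_left hab).resolve_right hba }
  -- its `<` is `r` by definition, so the lemmas below apply to `r` verbatim
  let : LinearOrder G := linearOrderOfSTO r
  have : MulLeftStrictMono G := ⟨fun g _ _ => hleft g _ _⟩
  have : MulLeftMono G := mulLeftMono_of_mulLeftStrictMono G
  obtain ⟨σ, hσ, hσ1, hσcof⟩ := exists_mem_center_one_lt_pow_cofinal hZfg hZcent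
    fun g => let ⟨_, _, z₂, hz₂, _, hgz₂⟩ := hcof g; ⟨z₂, hz₂, hgz₂⟩
  exact ⟨_, le_max_left _ _,
    coarselyConnectedWith_one_lt_of_central_cofinal hX.2.1 hX.2.2 hσ hσ1 hσcof⟩
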